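/- Virial theorem for the atomic M"uller functional: if γ is a minimizer of the relaxed atomic M"uller problem (one nucleus of charge Z at the origin), then 2·(1/2)Tr(-∇²γ) = Tr(Z|r|^{-1}γ) - D(ρ_γ, ρ_γ) + X(γ^{1/2}). -/

import Mathlib

open MeasureTheory

noncomputable section

abbrev E3 := EuclideanSpace ℝ (Fin 3)

/-- Exchange energy `X(δ) = (1/2) ∬ |δ(r,r')|²/|r-r'| dr dr'`. -/
def exchangeR (k : E3 → E3 → ℂ) : ℝ :=
  (1 / 2) * ∫ p : E3 × E3, ‖k p.1 p.2‖ ^ 2 / dist p.1 p.2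

/-- Kinetic energy `Tr(-∇² γ) = ∬ |∇_r γ^{1/2}(r,r')|² dr dr'` in terms of the
square-root kernel `k = γ^{1/2}(·,·)`. -/
def kineticR (k : E3 → E3 → ℂ) : ℝ :=
  ∫ p : E3 × E3, ‖fderiv ℝ (fun r => k r p.2) p.1‖ ^ 2

/-- Particle density `ρ_γ(r) = γ(r,r) = ∫ |γ^{1/2}(r,r')|² dr'`. -/
def rhoF (k : E3 → E3 → ℂ) (r : E3) : ℝ := ∫ r' : E3, ‖k r r'‖ ^ 2

/-- `Tr γ = ∬ |γ^{1/2}(r,r')|² dr dr'`. -/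
def traceR (k : E3 → E3 → ℂ) : ℝ := ∫ p : E3 × E3, ‖k p.1 p.2‖ ^ 2

/-- Direct Coulomb energy `D(ρ,μ) = (1/2) ∬ ρ(r) μ(r')/|r-r'| dr dr'`. -/
def dirD (ρ μ : E3 → ℝ) : ℝ := (1 / 2) * ∫ p : E3 × E3, ρ p.1 * μ p.2 / dist p.1 p.2

/-- `k` is the kernel of the square root `γ^{1/2}` of an admissible density matrix
`0 ≤ γ ≤ 1` with finite kinetic energy: `k` is hermitian, Hilbert–Schmidt, has finite
kinetic energy, and the quadratic form of `γ = (γ^{1/2})²` is bounded by `1`. -/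
structure IsSqrtDM (k : E3 → E3 → ℂ) : Prop where
  herm : ∀ r r', k r r' = starRingEnd ℂ (k r' r)
  hs : Integrable (fun p : E3 × E3 => ‖k p.1 p.2‖ ^ 2)
  kin : Integrable (fun p : E3 × E3 => ‖fderiv ℝ (fun r => k r p.2) p.1‖ ^ 2)
  diff : ∀ r', Differentiable ℝ (fun r => k r r')
  le_one : ∀ f : E3 → ℂ, MemLp f 2 (volume : Measure E3) →
    (∫ s : E3, ‖∫ r' : E3, k s r' * f r'‖ ^ 2) ≤ ∫ r : E3, ‖f r‖ ^ 2

/-- Coulomb potential of `K` nuclei of charges `Zs j` at positions `R j`. -/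
def coulombV {K : ℕ} (Zs : Fin K → ℝ) (R : Fin K → E3) (r : E3) : ℝ :=
  ∑ j, Zs j / dist r (R j)

/-- The Müller functional (in atomic units) with self-energy correction,
`Ê^M(γ) = (1/2)Tr(-∇²γ) - ∫ V_c ρ_γ + D(ρ_γ,ρ_γ) - X(γ^{1/2}) + (1/8) Tr γ`,
expressed via the square-root kernel `k = γ^{1/2}(·,·)`. -/
def EMhat {K : ℕ} (Zs : Fin K → ℝ) (R : Fin K → E3) (k : E3 → E3 → ℂ) : ℝ :=
  (1 / 2) * kineticR k - (∫ r : E3, coulombV Zs R r * rhoF k r) +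
    dirD (rhoF k) (rhoF k) - exchangeR k + (1 / 8) * traceR k

/-- The free (`Z = 0`) Müller functional
`E^M(γ) = (1/2)Tr(-∇²γ) + D(ρ_γ,ρ_γ) - X(γ^{1/2})`. -/
def EM0 (k : E3 → E3 → ℂ) : ℝ :=
  (1 / 2) * kineticR k + dirD (rhoF k) (rhoF k) - exchangeR k


/-!
The dilation `γ_c(x,x') = c³ γ(cx, cx')`, `c > 0`, preserves `0 ≤ γ ≤ 1` and `Tr γ`,
multiplies the kinetic energy by `c²` and the nuclear attraction, direct and exchange
energies by `c` (they are all homogeneous of degree `-1` in the coordinates). Hence along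
the dilations of a minimizer the energy is `c² T + c W + const`, minimal over `c > 0` at
`c = 1`, so `2T + W = 0`.
-/

instance : (volume : Measure (E3 × E3)).IsAddHaarMeasure := by
  rw [Measure.volume_eq_prod]
  infer_instance

section Dilation

variable {E F : Type*} [NormedAddCommGroup E] [NormedSpace ℝ E] [MeasurableSpace E]
  [BorelSpace E] [FiniteDimensional ℝ E] (μ : Measure E) [μ.IsAddHaarMeasure]
  [NormedAddCommGroup F]

theorem MeasureTheory.MemLp.comp_smul {f : E → F} {p : ENNReal} (hf : MemLp f p μ) {c : ℝ}
    (hc : c ≠ 0) : MemLp (fun x => f (c • x)) p μ := by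
  have hmap : MemLp f p (Measure.map (c • ·) μ) := by
    rw [Measure.map_addHaar_smul μ hc]
    exact hf.smul_measure ENNReal.ofReal_ne_top
  exact hmap.comp_of_map (measurable_const_smul c).aemeasurable

theorem integral_pow_mul_comp_smul (g : E → ℝ) (m : ℕ) {c : ℝ} (hc : 0 ≤ c) :
    ∫ x, c ^ m * g (c • x) ∂μ = c ^ m / c ^ Module.finrank ℝ E * ∫ x, g x ∂μ := by
  rw [integral_const_mul, Measure.integral_comp_smul_of_nonneg μ g c (hR := hc), smul_eq_mul,
    div_eq_mul_inv, mul_assoc]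

end Dilation

lemma integral_pow_mul_comp_smul_prod (g : E3 → E3 → ℝ) (m : ℕ) {c : ℝ} (hc : 0 ≤ c) :
    ∫ p : E3 × E3, c ^ m * g (c • p.1) (c • p.2)
      = c ^ m / c ^ 6 * ∫ p : E3 × E3, g p.1 p.2 := by
  simpa using integral_pow_mul_comp_smul volume (fun p : E3 × E3 => g p.1 p.2) m hc

/-- With this normalization `scaleK c k` is the square root of the dilation
`γ_c(x,x') = c³ γ(cx, cx')` of `γ = k²`. -/
def scaleK (c : ℝ) (k : E3 → E3 → ℂ) : E3 → E3 → ℂ :=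
  fun x y => (c ^ 3 : ℝ) • k (c • x) (c • y)

section Scaling

variable {c : ℝ} (hc : 0 < c) (k : E3 → E3 → ℂ)
include hc

lemma norm_scaleK_sq (x y : E3) :
    ‖scaleK c k x y‖ ^ 2 = c ^ 6 * ‖k (c • x) (c • y)‖ ^ 2 := by
  rw [scaleK, norm_smul, Real.norm_of_nonneg (by positivity)]
  ring

lemma norm_fderiv_scaleK_sq (x y : E3) :
    ‖fderiv ℝ (fun r => scaleK c k r y) x‖ ^ 2
      = c ^ 8 * ‖fderiv ℝ (fun r => k r (c • y)) (c • x)‖ ^ 2 := by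
  have hderiv : fderiv ℝ (fun r => scaleK c k r y) x
      = (c ^ 3 : ℝ) • c • fderiv ℝ (fun r => k r (c • y)) (c • x) := by
    rw [show (fun r => scaleK c k r y) = (c ^ 3 : ℝ) • fun r => k (c • r) (c • y) from rfl,
      fderiv_const_smul_field, Pi.smul_apply, fderiv_comp_smul (f := fun r => k r (c • y))]
  rw [hderiv, norm_smul, norm_smul, Real.norm_of_nonneg (by positivity),
    Real.norm_of_nonneg hc.le]
  ring

lemma traceR_scaleK : traceR (scaleK c k) = traceR k := by
  have hpoint (p : E3 × E3) :
      ‖scaleK c k p.1 p.2‖ ^ 2 = c ^ 6 * ‖k (c • p.1) (c • p.2)‖ ^ 2 :=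
    norm_scaleK_sq hc k p.1 p.2
  rw [traceR, integral_congr_ae (ae_of_all _ hpoint),
    integral_pow_mul_comp_smul_prod (fun x y => ‖k x y‖ ^ 2) 6 hc.le]
  simp [traceR, hc.ne']

lemma kineticR_scaleK : kineticR (scaleK c k) = c ^ 2 * kineticR k := by
  have hpoint (p : E3 × E3) :
      ‖fderiv ℝ (fun r => scaleK c k r p.2) p.1‖ ^ 2
        = c ^ 8 * ‖fderiv ℝ (fun r => k r (c • p.2)) (c • p.1)‖ ^ 2 :=
    norm_fderiv_scaleK_sq hc k p.1 p.2
  rw [kineticR, integral_congr_ae (ae_of_all _ hpoint),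
    integral_pow_mul_comp_smul_prod (fun x y => ‖fderiv ℝ (fun r => k r y) x‖ ^ 2) 8 hc.le]
  unfold kineticR
  field_simp

lemma rhoF_scaleK (r : E3) : rhoF (scaleK c k) r = c ^ 3 * rhoF k (c • r) := by
  rw [rhoF, integral_congr_ae (ae_of_all _ fun r' => norm_scaleK_sq hc k r r'),
    integral_pow_mul_comp_smul volume (fun r' => ‖k (c • r) r'‖ ^ 2) 6 hc.le]
  simp only [rhoF, finrank_euclideanSpace_fin]
  field_simp

lemma integral_coulomb_mul_rhoF_scaleK (Z : ℝ) :
    ∫ r : E3, Z / ‖r‖ * rhoF (scaleK c k) r = c * ∫ r : E3, Z / ‖r‖ * rhoF k r := by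
  have hpoint (r : E3) :
      Z / ‖r‖ * rhoF (scaleK c k) r = c ^ 4 * (Z / ‖c • r‖ * rhoF k (c • r)) := by
    rw [rhoF_scaleK hc, norm_smul, Real.norm_of_nonneg hc.le]
    field_simp
  rw [integral_congr_ae (ae_of_all _ hpoint),
    integral_pow_mul_comp_smul volume (fun r => Z / ‖r‖ * rhoF k r) 4 hc.le,
    finrank_euclideanSpace_fin]
  field_simp

lemma dirD_rhoF_scaleK :
    dirD (rhoF (scaleK c k)) (rhoF (scaleK c k)) = c * dirD (rhoF k) (rhoF k) := by
  have hpoint (p : E3 × E3) :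
      rhoF (scaleK c k) p.1 * rhoF (scaleK c k) p.2 / dist p.1 p.2
        = c ^ 7 * (rhoF k (c • p.1) * rhoF k (c • p.2) / dist (c • p.1) (c • p.2)) := by
    rw [rhoF_scaleK hc, rhoF_scaleK hc, dist_smul₀, Real.norm_of_nonneg hc.le]
    field_simp
  rw [dirD, integral_congr_ae (ae_of_all _ hpoint),
    integral_pow_mul_comp_smul_prod (fun x y => rhoF k x * rhoF k y / dist x y) 7 hc.le]
  unfold dirD
  field_simp

lemma exchangeR_scaleK : exchangeR (scaleK c k) = c * exchangeR k := by
  have hpoint (p : E3 × E3) :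
      ‖scaleK c k p.1 p.2‖ ^ 2 / dist p.1 p.2
        = c ^ 7 * (‖k (c • p.1) (c • p.2)‖ ^ 2 / dist (c • p.1) (c • p.2)) := by
    rw [norm_scaleK_sq hc, dist_smul₀, Real.norm_of_nonneg hc.le]
    field_simp
  rw [exchangeR, integral_congr_ae (ae_of_all _ hpoint),
    integral_pow_mul_comp_smul_prod (fun x y => ‖k x y‖ ^ 2 / dist x y) 7 hc.le]
  unfold exchangeR
  field_simp

lemma integral_scaleK_mul (f : E3 → ℂ) (s : E3) :
    ∫ r', scaleK c k s r' * f r' = ∫ u, k (c • s) u * f (c⁻¹ • u) := by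
  have hpoint (r' : E3) :
      scaleK c k s r' * f r'
        = (c ^ 3 : ℝ) • (k (c • s) (c • r') * f (c⁻¹ • c • r')) := by
    rw [inv_smul_smul₀ hc.ne', scaleK, smul_mul_assoc]
  rw [integral_congr_ae (ae_of_all _ hpoint), integral_smul,
    Measure.integral_comp_smul_of_nonneg volume (fun u => k (c • s) u * f (c⁻¹ • u)) c
      (hR := hc.le), finrank_euclideanSpace_fin, smul_smul, mul_inv_cancel₀ (by positivity),
    one_smul]

lemma isSqrtDM_scaleK {k : E3 → E3 → ℂ} (hk : IsSqrtDM k) : IsSqrtDM (scaleK c k) where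
  herm r r' := by rw [scaleK, scaleK, hk.herm (c • r), RCLike.conj_smul]
  hs := ((hk.hs.comp_smul hc.ne').const_mul (c ^ 6)).congr
    (ae_of_all _ fun p => (norm_scaleK_sq hc k p.1 p.2).symm)
  kin := ((hk.kin.comp_smul hc.ne').const_mul (c ^ 8)).congr
    (ae_of_all _ fun p => (norm_fderiv_scaleK_sq hc k p.1 p.2).symm)
  diff r' := by
    exact ((hk.diff (c • r')).comp (differentiable_id.const_smul c)).const_smul (c ^ 3 : ℝ)
  le_one f hf := by
    calc ∫ s, ‖∫ r', scaleK c k s r' * f r'‖ ^ 2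
        = ∫ s, ‖∫ u, k (c • s) u * f (c⁻¹ • u)‖ ^ 2 := by
          simp_rw [integral_scaleK_mul hc]
      _ = (c ^ 3)⁻¹ * ∫ t, ‖∫ u, k t u * f (c⁻¹ • u)‖ ^ 2 := by
        simpa using Measure.integral_comp_smul_of_nonneg volume
          (fun t => ‖∫ u, k t u * f (c⁻¹ • u)‖ ^ 2) c (hR := hc.le)
      _ ≤ (c ^ 3)⁻¹ * ∫ u, ‖f (c⁻¹ • u)‖ ^ 2 := by
        have hg : MemLp (fun u => f (c⁻¹ • u)) 2 volume :=
          hf.comp_smul volume (inv_ne_zero hc.ne')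
        exact mul_le_mul_of_nonneg_left (hk.le_one _ hg) (by positivity)
      _ = ∫ r, ‖f r‖ ^ 2 := by
        rw [Measure.integral_comp_inv_smul_of_nonneg volume (fun r => ‖f r‖ ^ 2) hc.le,
          finrank_euclideanSpace_fin, smul_eq_mul]
        field_simp

end Scaling

lemma coulombV_atom (Z : ℝ) (r : E3) :
    coulombV (fun _ : Fin 1 => Z) (fun _ => 0) r = Z / ‖r‖ := by
  simp [coulombV]

lemma EMhat_atom (Z : ℝ) (k : E3 → E3 → ℂ) :
    EMhat (fun _ : Fin 1 => Z) (fun _ => 0) k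
      = (1 / 2) * kineticR k - (∫ r : E3, Z / ‖r‖ * rhoF k r) + dirD (rhoF k) (rhoF k)
        - exchangeR k + (1 / 8) * traceR k := by
  simp only [EMhat, coulombV_atom]

lemma EMhat_atom_scaleK {c : ℝ} (hc : 0 < c) (Z : ℝ) (k : E3 → E3 → ℂ) :
    EMhat (fun _ : Fin 1 => Z) (fun _ => 0) (scaleK c k)
      = c ^ 2 * ((1 / 2) * kineticR k)
        + c * (-(∫ r : E3, Z / ‖r‖ * rhoF k r) + dirD (rhoF k) (rhoF k) - exchangeR k)
        + (1 / 8) * traceR k := by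
  rw [EMhat_atom, kineticR_scaleK hc, integral_coulomb_mul_rhoF_scaleK hc,
    dirD_rhoF_scaleK hc, exchangeR_scaleK hc, traceR_scaleK hc]
  ring

lemma two_mul_add_eq_zero_of_isMinOn {a b : ℝ}
    (h : IsMinOn (fun c : ℝ => c ^ 2 * a + c * b) (Set.Ioi 0) 1) : 2 * a + b = 0 := by
  have hderiv : HasDerivAt (fun c : ℝ => c ^ 2 * a + c * b) (2 * a + b) 1 := by
    simpa using ((hasDerivAt_pow 2 (1 : ℝ)).mul_const a).fun_add ((hasDerivAt_id 1).mul_const b)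
  exact (h.isLocalMin (Ioi_mem_nhds one_pos)).hasDerivAt_eq_zero hderiv

theorem virial_theorem_general (Z : ℝ) (N : ℝ)
    (k : E3 → E3 → ℂ) (hk : IsSqrtDM k) (htr : traceR k ≤ N)
    (hmin : ∀ k' : E3 → E3 → ℂ, IsSqrtDM k' → traceR k' ≤ N →
      EMhat (fun _ : Fin 1 => Z) (fun _ => 0) k ≤
        EMhat (fun _ : Fin 1 => Z) (fun _ => 0) k') :
    2 * ((1 / 2) * kineticR k) =
      (∫ r : E3, Z / ‖r‖ * rhoF k r) - dirD (rhoF k) (rhoF k) + exchangeR k := by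
  have hdilation : IsMinOn (fun c : ℝ => c ^ 2 * ((1 / 2) * kineticR k)
      + c * (-(∫ r : E3, Z / ‖r‖ * rhoF k r) + dirD (rhoF k) (rhoF k) - exchangeR k))
      (Set.Ioi 0) 1 := isMinOn_iff.mpr fun c (hc : 0 < c) => by
    have hle := hmin (scaleK c k) (isSqrtDM_scaleK hc hk) ((traceR_scaleK hc k).trans_le htr)
    rw [EMhat_atom_scaleK hc, EMhat_atom] at hle
    linarith
  linarith [two_mul_add_eq_zero_of_isMinOn hdilation]

/-- Virial theorem for the atomic Müller functional: if `γ` is a minimizer of the relaxed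
atomic problem (one nucleus of charge `Z` at the origin), then
`2 · (1/2) Tr(-∇²γ) = Tr(Z |r|⁻¹ γ) - D(ρ_γ,ρ_γ) + X(γ^{1/2})`. -/
theorem virial_theorem (Z : ℝ) (hZ : 0 < Z) (N : ℝ) (hN : 0 < N)
    (k : E3 → E3 → ℂ) (hk : IsSqrtDM k) (htr : traceR k ≤ N)
    (hmin : ∀ k' : E3 → E3 → ℂ, IsSqrtDM k' → traceR k' ≤ N →
      EMhat (fun _ : Fin 1 => Z) (fun _ => 0) k ≤
        EMhat (fun _ : Fin 1 => Z) (fun _ => 0) k') :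
    2 * ((1 / 2) * kineticR k) =
      (∫ r : E3, Z / ‖r‖ * rhoF k r) - dirD (rhoF k) (rhoF k) + exchangeR k :=
  virial_theorem_general Z N k hk htr hmin

end
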